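/- arXiv:2401.14881 — 4 statements merged into one kernel-verified Lean document; each statement's English description precedes it below -/
import Mathlib

section
/- Let n, m, n_i be positive natural numbers with n_i ≤ n and n > m² + m. Then ⌊n_i / ⌊n/m⌋⌋ ≤ ⌊(n_i · m)/n⌋ + 1. -/
/-!
Write `q = ⌊n/m⌋`. Since `m² ≤ n` we have `m ≤ q`, so the remainder of `n` mod `m` is below `q`
and `n < (m + 1) q`. Hence `k = ⌊nᵢ/q⌋ ≤ m`, and `k n ≤ k (m + 1) q = k q m + k q ≤ nᵢ m + n`,
which is the claim after dividing by `n`.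
-/

theorem Int.floor_natCast_div_natCast {k : Type*} [Field k] [LinearOrder k] [IsOrderedRing k]
    [FloorRing k] (a b : ℕ) : ⌊(a : k) / b⌋ = (a / b : ℕ) := by
  rw [Int.floor_div_natCast, Int.floor_natCast, Int.natCast_div]

theorem Nat.lt_succ_mul_div_of_mul_self_le {n m : ℕ} (hm : 0 < m) (h : m * m ≤ n) :
    n < (m + 1) * (n / m) := by
  have hmq : m ≤ n / m := (Nat.le_div_iff_mul_le hm).2 h
  have := Nat.div_add_mod n m
  have := Nat.mod_lt n hm
  nlinarith

theorem Nat.div_le_mul_div_add_one {a n m q : ℕ} (hn : 0 < n) (ha : a ≤ n)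
    (hq : n < (m + 1) * q) : a / q ≤ a * m / n + 1 := by
  have hkm : a / q ≤ m :=
    Nat.lt_succ_iff.1 <| Nat.div_lt_of_lt_mul <| by rw [mul_comm]; exact ha.trans_lt hq
  have hkq : a / q * q ≤ a := Nat.div_mul_le_self a q
  rw [← Nat.add_div_right _ hn, Nat.le_div_iff_mul_le hn]
  calc a / q * n ≤ a / q * ((m + 1) * q) := Nat.mul_le_mul_left _ hq.le
    _ = a / q * q * m + a / q * q := by ring
    _ ≤ a * m + n := by gcongr; omega

theorem stmt_3_general (n m ni : ℕ) (hn : 0 < n) (hm : 0 < m)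
    (hni : ni ≤ n) (hbig : m ^ 2 + m < n) :
    ⌊(ni : ℝ) / (⌊(n : ℝ) / m⌋ : ℝ)⌋ ≤ ⌊((ni : ℝ) * m) / n⌋ + 1 := by
  have hq : n < (m + 1) * (n / m) := Nat.lt_succ_mul_div_of_mul_self_le hm (by nlinarith)
  rw [Int.floor_natCast_div_natCast, Int.cast_natCast, Int.floor_natCast_div_natCast,
    ← Nat.cast_mul, Int.floor_natCast_div_natCast]
  exact_mod_cast Nat.div_le_mul_div_add_one hn hni hq

theorem stmt_3 (n m ni : ℕ) (hn : 0 < n) (hm : 0 < m) (hni1 : 0 < ni)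
    (hni : ni ≤ n) (hbig : m ^ 2 + m < n) :
    ⌊(ni : ℝ) / (⌊(n : ℝ) / m⌋ : ℝ)⌋ ≤ ⌊((ni : ℝ) * m) / n⌋ + 1 :=
  stmt_3_general n m ni hn hm hni hbig
end

section
/- Let k ≥ 5 and H = Σ_{i=1}^{k-1} 1/i. For every real n ≥ k²·(H + 2)/(2H), (n·H + 2n − 2n/k) / (2·n·H − 2k) ≤ 1/2 + 1/H. -/
/-! Once the denominator `2nH - 2k` is known to be positive, cross-multiplying shows that the
inequality is equivalent to the hypothesis `k²(H + 2) ≤ 2nH`; all that is needed of `H` is `H > 0`. -/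

open Finset

lemma sum_Icc_one_div_pos {m : ℕ} (hm : 1 ≤ m) : 0 < ∑ i ∈ Icc 1 m, (1 : ℝ) / i :=
  sum_pos (fun i hi => by have := (mem_Icc.mp hi).1; positivity) ⟨1, mem_Icc.mpr ⟨le_rfl, hm⟩⟩

lemma div_le_half_add_inv {H k n : ℝ} (hH : 0 < H) (hk : 1 ≤ k)
    (hn : k ^ 2 * (H + 2) / (2 * H) ≤ n) :
    (n * H + 2 * n - 2 * n / k) / (2 * n * H - 2 * k) ≤ 1 / 2 + 1 / H := by
  have hk₀ : 0 < k := by linarith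
  have hn' : k ^ 2 * (H + 2) ≤ 2 * n * H := by
    rw [div_le_iff₀ (by positivity)] at hn
    linarith
  have hD : 0 < 2 * n * H - 2 * k := by
    nlinarith [mul_pos (pow_pos hk₀ 2) hH, mul_le_mul_of_nonneg_left hk hk₀.le]
  have hgap : (H + 2) * (2 * n * H - 2 * k) - (n * H + 2 * n - 2 * n / k) * (2 * H)
      = 2 / k * (2 * n * H - k ^ 2 * (H + 2)) := by
    field_simp
    ring
  rw [show 1 / 2 + 1 / H = (H + 2) / (2 * H) by field_simp,
    div_le_div_iff₀ hD (by positivity)]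
  linarith [mul_nonneg (div_nonneg zero_le_two hk₀.le) (sub_nonneg.mpr hn')]

theorem stmt_10 (k : ℕ) (hk : 5 ≤ k) (n : ℝ)
    (hn : n ≥ (k : ℝ) ^ 2 * ((∑ i ∈ Finset.Icc 1 (k - 1), (1 : ℝ) / i) + 2) /
      (2 * (∑ i ∈ Finset.Icc 1 (k - 1), (1 : ℝ) / i))) :
    (n * (∑ i ∈ Finset.Icc 1 (k - 1), (1 : ℝ) / i) + 2 * n - 2 * n / k) /
        (2 * n * (∑ i ∈ Finset.Icc 1 (k - 1), (1 : ℝ) / i) - 2 * k) ≤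
      1 / 2 + 1 / (∑ i ∈ Finset.Icc 1 (k - 1), (1 : ℝ) / i) :=
  div_le_half_add_inv (sum_Icc_one_div_pos (by omega)) (by exact_mod_cast (by omega : 1 ≤ k)) hn
end

section
/- Let q₁, …, q_{k-1}, q_k and n be natural numbers with Σ_{i=1}^{k-1} q_i + k·q_k ≤ n, let H = Σ_{i=1}^{k-1} 1/i, let b ≥ 0 and μ ∈ (0, 1/2] be reals, and suppose that for every i ∈ {1, …, k−1}, μ·⌊n/i⌋ − b ≤ q_i/2 + q_k. Then μ ≤ 1/H + (k−1)·(2b+1)/(2·n·H), provided n ≥ 1 and k ≥ 2. -/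
/-!
Since `n / i ≤ ⌊n/i⌋ + 1`, each hypothesis gives `μ n / i - (μ + b) ≤ q_i / 2 + q_k`. Summing over
`i = 1, …, k - 1` turns the left side into `μ n H - (k - 1)(μ + b)`, while the right side is at most
`∑ q_i + k q_k ≤ n`. Solving `μ n H ≤ n + (k - 1)(μ + b)` for `μ`, with `μ ≤ 1/2`, gives the bound.
-/

open Finset

lemma mul_cast_div_le_mul_nat_div_add_self {μ : ℝ} (hμ : 0 ≤ μ) (n i : ℕ) :
    μ * ((n : ℝ) / i) ≤ μ * ((n / i : ℕ) : ℝ) + μ := by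
  have hfloor : (n : ℝ) / i ≤ ((n / i : ℕ) : ℝ) + 1 := by
    simpa only [Nat.floor_div_eq_div] using (Nat.lt_floor_add_one ((n : ℝ) / i)).le
  nlinarith

lemma sum_half_add_le_sum_add_mul {ι : Type*} (s : Finset ι) (x : ι → ℝ) (hx : ∀ i ∈ s, 0 ≤ x i)
    {c : ℝ} (hc : 0 ≤ c) {k : ℕ} (hs : #s ≤ k) :
    ∑ i ∈ s, (x i / 2 + c) ≤ ∑ i ∈ s, x i + k * c := by
  rw [sum_add_distrib, sum_const, nsmul_eq_mul, ← sum_div]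
  have hsk : (#s : ℝ) * c ≤ k * c := by gcongr
  linarith [sum_nonneg hx]

lemma sum_Icc_mul_div_sub (μ c : ℝ) (n m : ℕ) :
    ∑ i ∈ Icc 1 m, (μ * ((n : ℝ) / i) - c) = μ * n * ∑ i ∈ Icc 1 m, (1 : ℝ) / i - m * c := by
  simp only [sum_sub_distrib, sum_const, Nat.card_Icc, add_tsub_cancel_right, nsmul_eq_mul,
    mul_sum, mul_one_div, mul_div_assoc]

lemma mul_harmonic_le_of_forall_le (k n : ℕ) (q : ℕ → ℕ)
    (hq : (∑ i ∈ Icc 1 (k - 1), q i) + k * q k ≤ n) {b μ : ℝ} (hμ : 0 ≤ μ)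
    (h : ∀ i ∈ Icc 1 (k - 1), μ * ((n / i : ℕ) : ℝ) - b ≤ (q i : ℝ) / 2 + (q k : ℝ)) :
    μ * n * ∑ i ∈ Icc 1 (k - 1), (1 : ℝ) / i - ((k - 1 : ℕ) : ℝ) * (μ + b) ≤ n :=
  calc μ * n * ∑ i ∈ Icc 1 (k - 1), (1 : ℝ) / i - ((k - 1 : ℕ) : ℝ) * (μ + b)
      = ∑ i ∈ Icc 1 (k - 1), (μ * ((n : ℝ) / i) - (μ + b)) := (sum_Icc_mul_div_sub ..).symm
    _ ≤ ∑ i ∈ Icc 1 (k - 1), ((q i : ℝ) / 2 + (q k : ℝ)) := by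
      refine sum_le_sum fun i hi => ?_
      linarith [h i hi, mul_cast_div_le_mul_nat_div_add_self hμ n i]
    _ ≤ ∑ i ∈ Icc 1 (k - 1), (q i : ℝ) + k * (q k : ℝ) :=
      sum_half_add_le_sum_add_mul _ _ (fun _ _ => Nat.cast_nonneg _) (Nat.cast_nonneg _)
        (by simp only [Nat.card_Icc]; omega)
    _ ≤ n := by exact_mod_cast hq

lemma le_inv_add_of_mul_le {μ b m n H : ℝ} (hH : 0 < H) (hn : 0 < n) (hm : 0 ≤ m)
    (hμ : μ ≤ 1 / 2) (h : μ * n * H - m * (μ + b) ≤ n) :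
    μ ≤ 1 / H + m * (2 * b + 1) / (2 * n * H) := by
  have hsum : 1 / H + m * (2 * b + 1) / (2 * n * H) = (n + m * (2 * b + 1) / 2) / (n * H) := by
    field_simp
  rw [hsum, le_div_iff₀ (by positivity)]
  nlinarith

theorem stmt_11_general (k n : ℕ) (hk : 2 ≤ k) (hn : 1 ≤ n) (q : ℕ → ℕ)
    (hq : (∑ i ∈ Finset.Icc 1 (k - 1), q i) + k * q k ≤ n)
    (b μ : ℝ) (hμ0 : 0 < μ) (hμ : μ ≤ 1 / 2)
    (h : ∀ i ∈ Finset.Icc 1 (k - 1),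
      μ * ((n / i : ℕ) : ℝ) - b ≤ (q i : ℝ) / 2 + (q k : ℝ)) :
    μ ≤ 1 / (∑ i ∈ Finset.Icc 1 (k - 1), (1 : ℝ) / i) +
      (k - 1 : ℝ) * (2 * b + 1) /
        (2 * n * (∑ i ∈ Finset.Icc 1 (k - 1), (1 : ℝ) / i)) := by
  have hH : 0 < ∑ i ∈ Icc 1 (k - 1), (1 : ℝ) / i :=
    sum_pos (fun i hi => by have := (mem_Icc.mp hi).1; positivity) ⟨1, by simp; omega⟩
  have hkm : ((k - 1 : ℕ) : ℝ) = (k : ℝ) - 1 := Nat.cast_pred (by omega)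
  have hsummed := mul_harmonic_le_of_forall_le k n q hq hμ0.le h
  rw [hkm] at hsummed
  exact le_inv_add_of_mul_le hH (by exact_mod_cast hn) (by rw [← hkm]; positivity) hμ hsummed

theorem stmt_11 (k n : ℕ) (hk : 2 ≤ k) (hn : 1 ≤ n) (q : ℕ → ℕ)
    (hq : (∑ i ∈ Finset.Icc 1 (k - 1), q i) + k * q k ≤ n)
    (b μ : ℝ) (hb : 0 ≤ b) (hμ0 : 0 < μ) (hμ : μ ≤ 1 / 2)
    (h : ∀ i ∈ Finset.Icc 1 (k - 1),
      μ * ((n / i : ℕ) : ℝ) - b ≤ (q i : ℝ) / 2 + (q k : ℝ)) :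
    μ ≤ 1 / (∑ i ∈ Finset.Icc 1 (k - 1), (1 : ℝ) / i) +
      (k - 1 : ℝ) * (2 * b + 1) /
        (2 * n * (∑ i ∈ Finset.Icc 1 (k - 1), (1 : ℝ) / i)) :=
  stmt_11_general k n hk hn q hq b μ hμ0 hμ h
end

section
/- Let j, g, ℓ, x be natural numbers with ℓ ≥ 1 and j ≤ ℓ, and let n_i, n be natural numbers with n_i ≥ g·x. If m = ⌊n_i/ℓ⌋ then j·m ≥ ⌊(j·g)/ℓ⌋·x − j, where the floors denote natural division interpreted in the integers. -/
theorem Nat.mul_div_le_mul_div_add (a b c : ℕ) : a * b / c ≤ a * (b / c) + a := by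
  rcases Nat.eq_zero_or_pos c with rfl | hc
  · simp
  · apply Nat.div_le_of_le_mul
    calc a * b ≤ a * (c * (b / c + 1)) := Nat.mul_le_mul_left a (Nat.lt_mul_div_succ b hc).le
      _ = c * (a * (b / c) + a) := by ring

theorem Nat.div_mul_le_mul_div_add_of_mul_le {j g x n : ℕ} (ℓ : ℕ) (h : g * x ≤ n) :
    j * g / ℓ * x ≤ j * (n / ℓ) + j :=
  calc j * g / ℓ * x = x * (j * g / ℓ) := Nat.mul_comm _ _
    _ ≤ x * (j * g) / ℓ := Nat.mul_div_le_mul_div_assoc x (j * g) ℓ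
    _ ≤ j * n / ℓ := Nat.div_le_div_right <| by
      rw [Nat.mul_comm, Nat.mul_assoc]; exact Nat.mul_le_mul_left j h
    _ ≤ j * (n / ℓ) + j := Nat.mul_div_le_mul_div_add j n ℓ

theorem stmt_16_general (j g ℓ x ni m : ℕ)
    (hni : g * x ≤ ni) (hm : m = ni / ℓ) :
    ((j * g / ℓ : ℕ) : ℤ) * x - j ≤ (j : ℤ) * m := by
  subst hm
  have key : ((j * g / ℓ : ℕ) : ℤ) * x ≤ j * ((ni / ℓ : ℕ) : ℤ) + j := by
    exact_mod_cast Nat.div_mul_le_mul_div_add_of_mul_le ℓ hni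
  linarith

theorem stmt_16 (j g ℓ x ni n m : ℕ) (hℓ : 1 ≤ ℓ) (hj : j ≤ ℓ)
    (hni : g * x ≤ ni) (hm : m = ni / ℓ) :
    ((j * g / ℓ : ℕ) : ℤ) * x - j ≤ (j : ℤ) * m :=
  stmt_16_general j g ℓ x ni m hni hm
end
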